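/- Let n ≥ 2, Ω ⊆ ℝⁿ open, and v a measurable function on Ω. Define the homogeneous Morrey–Campanato type norms ‖v‖²_{Ẋ} = sup_{R>0} R^{-2} ∫_{Ω∩{|x|=R}} |v|² dS and ‖v‖²_{Ẏ} = sup_{R>0} R^{-1} ∫_{Ω∩{|x|≤R}} |v|² dx. Then ‖ |x|^{-1} v ‖_{Ẏ} ≤ ‖v‖_{Ẋ}. -/

import Mathlib

/-! In polar coordinates `x = r ω`, the integral of `|v|² / |x|²` over `Ω ∩ {|x| ≤ R}` becomes
`∫₀ᴿ r⁻² (∫_{Ω ∩ {|x| = r}} |v|² dS) dr`. Each integrand `r⁻² ∫_{Ω ∩ {|x| = r}} |v|² dS` is at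
most `‖v‖²_{Ẋ}`, so the integral is at most `R ‖v‖²_{Ẋ}`. -/

open MeasureTheory ENNReal

/-- The surface integral `∫_{Ω ∩ {|x| = R}} |v|² dS`, expressed in polar coordinates via the
surface measure `volume.toSphere` on the unit sphere. -/
noncomputable def sphereInt (n : ℕ) (Ω : Set (EuclideanSpace ℝ (Fin n)))
    (v : EuclideanSpace ℝ (Fin n) → ℂ) (R : ℝ) : ℝ≥0∞ :=
  ENNReal.ofReal (R ^ (n - 1)) *
    ∫⁻ ω : Metric.sphere (0 : EuclideanSpace ℝ (Fin n)) 1,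
      Ω.indicator (fun x => (‖v x‖₊ : ℝ≥0∞) ^ 2) (R • (ω : EuclideanSpace ℝ (Fin n)))
      ∂((volume : Measure (EuclideanSpace ℝ (Fin n))).toSphere)

/-- The square of the homogeneous Morrey–Campanato trace norm
`‖v‖²_{Ẋ} = sup_{R>0} R^{-2} ∫_{Ω ∩ {|x|=R}} |v|² dS`. -/
noncomputable def Xnorm2 (n : ℕ) (Ω : Set (EuclideanSpace ℝ (Fin n)))
    (v : EuclideanSpace ℝ (Fin n) → ℂ) : ℝ≥0∞ :=
  ⨆ R ∈ Set.Ioi (0 : ℝ), (ENNReal.ofReal (R ^ 2))⁻¹ * sphereInt n Ω v R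

/-- The square of the homogeneous Morrey–Campanato norm
`‖v‖²_{Ẏ} = sup_{R>0} R^{-1} ∫_{Ω ∩ {|x| ≤ R}} |v|² dx`. -/
noncomputable def Ynorm2 (n : ℕ) (Ω : Set (EuclideanSpace ℝ (Fin n)))
    (v : EuclideanSpace ℝ (Fin n) → ℂ) : ℝ≥0∞ :=
  ⨆ R ∈ Set.Ioi (0 : ℝ), (ENNReal.ofReal R)⁻¹ *
    ∫⁻ x in Ω ∩ Metric.closedBall (0 : EuclideanSpace ℝ (Fin n)) R, (‖v x‖₊ : ℝ≥0∞) ^ 2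

open Metric Set

section PolarCoordinates

variable {E : Type*} [NormedAddCommGroup E] [NormedSpace ℝ E] [FiniteDimensional ℝ E]
  [MeasurableSpace E] [BorelSpace E] [Nontrivial E]

theorem lintegral_eq_lintegral_Ioi_mul_lintegral_sphere (μ : Measure E) [μ.IsAddHaarMeasure]
    {g : E → ℝ≥0∞} (hg : Measurable g) :
    ∫⁻ x, g x ∂μ = ∫⁻ r in Ioi (0 : ℝ), ENNReal.ofReal (r ^ (Module.finrank ℝ E - 1)) *
      ∫⁻ ω : sphere (0 : E) 1, g (r • (ω : E)) ∂μ.toSphere := by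
  have hg' : Measurable fun p : sphere (0 : E) 1 × Ioi (0 : ℝ) ↦ g ((p.2 : ℝ) • (p.1 : E)) :=
    hg.comp (by fun_prop)
  calc ∫⁻ x, g x ∂μ = ∫⁻ x : ({0}ᶜ : Set E), g x ∂μ.comap (↑) := by
        rw [lintegral_subtype_comap (measurableSet_singleton 0).compl,
          restrict_compl_singleton]
    _ = ∫⁻ p : sphere (0 : E) 1 × Ioi (0 : ℝ), g ((p.2 : ℝ) • (p.1 : E))
          ∂μ.toSphere.prod (.volumeIoiPow (Module.finrank ℝ E - 1)) := by
        rw [← μ.measurePreserving_homeomorphUnitSphereProd.lintegral_comp hg']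
        congr! with x
        conv_lhs => rw [← (homeomorphUnitSphereProd E).symm_apply_apply x]
        rfl
    _ = ∫⁻ r : Ioi (0 : ℝ), ∫⁻ ω : sphere (0 : E) 1, g ((r : ℝ) • (ω : E)) ∂μ.toSphere
          ∂.volumeIoiPow (Module.finrank ℝ E - 1) :=
        lintegral_prod_symm _ hg'.aemeasurable
    _ = _ := by
        rw [Measure.volumeIoiPow, lintegral_withDensity_eq_lintegral_mul_non_measurable _
          (by fun_prop) (.of_forall fun _ ↦ ofReal_lt_top)]
        exact lintegral_subtype_comap measurableSet_Ioi (fun r ↦ ENNReal.ofReal (r ^ _) *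
          ∫⁻ ω : sphere (0 : E) 1, g (r • (ω : E)) ∂μ.toSphere)

theorem setLIntegral_closedBall_eq_lintegral_Ioc_mul_lintegral_sphere (μ : Measure E)
    [μ.IsAddHaarMeasure] {g : E → ℝ≥0∞} (hg : Measurable g) (R : ℝ) :
    ∫⁻ x in closedBall 0 R, g x ∂μ = ∫⁻ r in Ioc 0 R,
      ENNReal.ofReal (r ^ (Module.finrank ℝ E - 1)) *
        ∫⁻ ω : sphere (0 : E) 1, g (r • (ω : E)) ∂μ.toSphere := by
  have hslice : ∀ r ∈ Ioi (0 : ℝ), ENNReal.ofReal (r ^ (Module.finrank ℝ E - 1)) *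
        ∫⁻ ω : sphere (0 : E) 1, (closedBall 0 R).indicator g (r • (ω : E)) ∂μ.toSphere
      = (Iic R).indicator (fun r ↦ ENNReal.ofReal (r ^ (Module.finrank ℝ E - 1)) *
        ∫⁻ ω : sphere (0 : E) 1, g (r • (ω : E)) ∂μ.toSphere) r := by
    intro r hr
    have hnorm (ω : sphere (0 : E) 1) : ‖r • (ω : E)‖ = r := by
      simp [norm_smul, abs_of_pos (mem_Ioi.mp hr)]
    by_cases hrR : r ≤ R <;> simp [indicator, hnorm, hrR]
  rw [← lintegral_indicator measurableSet_closedBall,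
    lintegral_eq_lintegral_Ioi_mul_lintegral_sphere μ (hg.indicator measurableSet_closedBall),
    setLIntegral_congr_fun measurableSet_Ioi hslice, lintegral_indicator measurableSet_Iic,
    Measure.restrict_restrict measurableSet_Iic, Iic_inter_Ioi]

end PolarCoordinates

section Euclidean

variable {n : ℕ}

theorem setLIntegral_inter_closedBall_eq_lintegral_sphereInt [NeZero n]
    {Ω : Set (EuclideanSpace ℝ (Fin n))} (hΩ : MeasurableSet Ω)
    {w : EuclideanSpace ℝ (Fin n) → ℂ} (hw : Measurable w) (R : ℝ) :
    ∫⁻ x in Ω ∩ closedBall 0 R, (‖w x‖₊ : ℝ≥0∞) ^ 2 = ∫⁻ r in Ioc 0 R, sphereInt n Ω w r := by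
  rw [← Measure.restrict_restrict hΩ, ← lintegral_indicator hΩ,
    setLIntegral_closedBall_eq_lintegral_Ioc_mul_lintegral_sphere _ (by fun_prop),
    finrank_euclideanSpace_fin]
  rfl

theorem sphereInt_inv_norm_smul {r : ℝ} (hr : 0 < r) (Ω : Set (EuclideanSpace ℝ (Fin n)))
    (v : EuclideanSpace ℝ (Fin n) → ℂ) :
    sphereInt n Ω (fun x ↦ (‖x‖⁻¹ : ℝ) • v x) r =
      (ENNReal.ofReal (r ^ 2))⁻¹ * sphereInt n Ω v r := by
  have hr2 : 0 < r ^ 2 := by positivity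
  have hpoint (ω : sphere (0 : EuclideanSpace ℝ (Fin n)) 1) :
      Ω.indicator (fun x ↦ (‖(‖x‖⁻¹ : ℝ) • v x‖₊ : ℝ≥0∞) ^ 2)
          (r • (ω : EuclideanSpace ℝ (Fin n)))
        = (ENNReal.ofReal (r ^ 2))⁻¹ * Ω.indicator (fun x ↦ (‖v x‖₊ : ℝ≥0∞) ^ 2) (r • ω) := by
    have hnorm : ‖r • (ω : EuclideanSpace ℝ (Fin n))‖ = r := by simp [norm_smul, hr.le]
    by_cases hx : r • (ω : EuclideanSpace ℝ (Fin n)) ∈ Ω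
    · simp only [indicator_of_mem hx, hnorm, nnnorm_smul, coe_mul, mul_pow]
      rw [← ofReal_inv_of_pos hr2, ← ofReal_coe_nnreal, coe_nnnorm, norm_inv, Real.norm_eq_abs,
        abs_of_pos hr, ← ofReal_pow (by positivity), inv_pow]
    · simp [indicator_of_notMem hx]
  rw [sphereInt, sphereInt, lintegral_congr hpoint, lintegral_const_mul' _ _ (by simp [hr.ne']),
    mul_left_comm]

theorem Ynorm2_inv_norm_smul_le_Xnorm2 [NeZero n] {Ω : Set (EuclideanSpace ℝ (Fin n))}
    (hΩ : MeasurableSet Ω)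
    {v : EuclideanSpace ℝ (Fin n) → ℂ} (hv : Measurable v) :
    Ynorm2 n Ω (fun x ↦ (‖x‖⁻¹ : ℝ) • v x) ≤ Xnorm2 n Ω v := by
  refine iSup₂_le fun R (hR : 0 < R) ↦ ?_
  calc (ENNReal.ofReal R)⁻¹ * ∫⁻ x in Ω ∩ closedBall 0 R, (‖(‖x‖⁻¹ : ℝ) • v x‖₊ : ℝ≥0∞) ^ 2
      = (ENNReal.ofReal R)⁻¹ *
          ∫⁻ r in Ioc 0 R, (ENNReal.ofReal (r ^ 2))⁻¹ * sphereInt n Ω v r := by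
        rw [setLIntegral_inter_closedBall_eq_lintegral_sphereInt hΩ (by fun_prop),
          setLIntegral_congr_fun measurableSet_Ioc fun r hr ↦ sphereInt_inv_norm_smul hr.1 Ω v]
    _ ≤ (ENNReal.ofReal R)⁻¹ * ∫⁻ _ in Ioc 0 R, Xnorm2 n Ω v := by
        refine mul_le_mul_right (setLIntegral_mono' measurableSet_Ioc fun r hr ↦ ?_) _
        exact le_biSup (fun r ↦ (ENNReal.ofReal (r ^ 2))⁻¹ * sphereInt n Ω v r) hr.1
    _ = Xnorm2 n Ω v := by
        rw [setLIntegral_const, Real.volume_Ioc, sub_zero, mul_comm, mul_assoc,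
          ENNReal.mul_inv_cancel (by simpa using hR) ofReal_ne_top, mul_one]

end Euclidean

/-- For `n ≥ 2`, `Ω ⊆ ℝⁿ` open and `v` measurable: `‖ |x|⁻¹ v ‖_{Ẏ} ≤ ‖v‖_{Ẋ}`. -/
theorem stmt_5 (n : ℕ) (hn : 2 ≤ n) (Ω : Set (EuclideanSpace ℝ (Fin n))) (hΩ : IsOpen Ω)
    (v : EuclideanSpace ℝ (Fin n) → ℂ) (hv : Measurable v) :
    (Ynorm2 n Ω fun x => (‖x‖⁻¹ : ℝ) • v x) ^ (1 / 2 : ℝ)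
      ≤ (Xnorm2 n Ω v) ^ (1 / 2 : ℝ) := by
  have : NeZero n := ⟨by omega⟩
  exact rpow_le_rpow (Ynorm2_inv_norm_smul_le_Xnorm2 hΩ.measurableSet hv) (by norm_num)
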